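/- Let H be a real Hilbert space, λ ∈ ℝ, and let Φ : H → (−∞,+∞] be proper, λ-convex, and lower semicontinuous. Then for every γ ∈ 𝔦_{−λ} one has J_γ(Φ) = R_γ(∂^λΦ) as operators on H, and moreover for all (x,y), (x̂,ŷ) ∈ J_γ(Φ), ‖y − ŷ‖ ≤ (1 + γλ)⁻¹ ‖x − x̂‖. -/

import Mathlib

open scoped RealInnerProductSpace

/-- The identity operator `I_X = {(x,x) | x ∈ X}`. -/
def idOp (X : Type*) : Set (X × X) := {p | p.2 = p.1}

/-- Sum of operators: `A + B = {(x, y+z) | (x,y) ∈ A, (x,z) ∈ B}`. -/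
def opAdd {X : Type*} [Add X] (A B : Set (X × X)) : Set (X × X) :=
  {p | ∃ y z, (p.1, y) ∈ A ∧ (p.1, z) ∈ B ∧ p.2 = y + z}

/-- Scalar multiple of an operator: `λA = {(x, λy) | (x,y) ∈ A}`. -/
def opSMul {X : Type*} [SMul ℝ X] (c : ℝ) (A : Set (X × X)) : Set (X × X) :=
  {p | ∃ y, (p.1, y) ∈ A ∧ p.2 = c • y}

/-- The inverse operator `A⁻¹ = {(x,y) | (y,x) ∈ A}`. -/
def opInv {X : Type*} (A : Set (X × X)) : Set (X × X) := {p | (p.2, p.1) ∈ A}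

/-- The resolvent `R_λ(A) = (I_X + λA)⁻¹`. -/
def opResolvent {X : Type*} [Add X] [SMul ℝ X] (c : ℝ) (A : Set (X × X)) : Set (X × X) :=
  opInv (opAdd (idOp X) (opSMul c A))

/-- The subdifferential of `Φ : H → (−∞,+∞]`:
`∂Φ = {(x,y) | ∀ h, Φ(x+h) ≥ Φ(x) + ⟨y,h⟩}`. -/
def subdiff {H : Type*} [NormedAddCommGroup H] [InnerProductSpace ℝ H]
    (Φ : H → EReal) : Set (H × H) :=
  {p | ∀ h : H, Φ p.1 + ((⟪p.2, h⟫ : ℝ) : EReal) ≤ Φ (p.1 + h)}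

/-- The adjusted subdifferential `∂^λΦ := ∂(Φ − (λ/2)‖·‖²) + λ I_H`. -/
def subdiffL {H : Type*} [NormedAddCommGroup H] [InnerProductSpace ℝ H]
    (l : ℝ) (Φ : H → EReal) : Set (H × H) :=
  opAdd (subdiff (fun x => Φ x - (((l / 2) * ‖x‖ ^ 2 : ℝ) : EReal))) (opSMul l (idOp H))

/-- `Φ` is `λ`-convex: `Φ(tx + (1−t)y) ≤ tΦ(x) + (1−t)Φ(y) − (λ/2)t(1−t)‖x−y‖²`. -/
def LambdaConvex {H : Type*} [NormedAddCommGroup H] [NormedSpace ℝ H]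
    (l : ℝ) (Φ : H → EReal) : Prop :=
  ∀ x y : H, ∀ t : ℝ, t ∈ Set.Icc (0 : ℝ) 1 →
    Φ (t • x + (1 - t) • y) ≤
      (t : EReal) * Φ x + ((1 - t : ℝ) : EReal) * Φ y
        - (((l / 2) * t * (1 - t) * ‖x - y‖ ^ 2 : ℝ) : EReal)

/-- The Moreau envelope `[Φ]^γ(x) = inf_y ( Φ(y) + ‖y − x‖²/(2γ) )`. -/
noncomputable def moreauEnv {H : Type*} [NormedAddCommGroup H]
    (Φ : H → EReal) (γ : ℝ) (x : H) : EReal :=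
  ⨅ y : H, Φ y + ((‖y - x‖ ^ 2 / (2 * γ) : ℝ) : EReal)

/-- The proximal operator `J_γ(Φ) = {(x,y) | [Φ]^γ(x) = Φ(y) + ‖y − x‖²/(2γ)}`. -/
noncomputable def proxOp {H : Type*} [NormedAddCommGroup H]
    (Φ : H → EReal) (γ : ℝ) : Set (H × H) :=
  {p | moreauEnv Φ γ p.1 = Φ p.2 + ((‖p.2 - p.1‖ ^ 2 / (2 * γ) : ℝ) : EReal)}

open Classical in
/-- The interval `𝔦_ω`: `(0, 1/ω)` if `ω > 0` and `(0, +∞)` if `ω ≤ 0`. -/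
noncomputable def Iomega (ω : ℝ) : Set ℝ :=
  if 0 < ω then Set.Ioo 0 (1 / ω) else Set.Ioi 0

/-!
Both `J_γ(Φ)` and `R_γ(∂^λΦ)` consist of the pairs `(x, y)` for which `v = (x - y)/γ` supports `Φ`
at `y` by a quadratic minorant, `Φ (y + h) ≥ Φ y + ⟪v, h⟫ + (μ/2)‖h‖²`: the resolvent with
`μ = λ`, the proximal map with `μ = -1/γ`. For a `λ`-convex `Φ` a minorant with any `μ` upgrades
to one with `μ = λ` (compare `Φ` along the segment from `y` to `y + h` and let the step tend to
`0`), and `-1/γ ≤ λ` for `γ ∈ 𝔦_{-λ}`, so the two sets agree. Adding the minorants at two points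
gives `⟪v - v̂, y - ŷ⟫ ≥ λ‖y - ŷ‖²`, which is the Lipschitz bound.
-/

open Filter Set Topology

lemma EReal.add_coe_le_add_coe_iff {a b : EReal} {c d : ℝ} :
    a + c ≤ b + d ↔ a + ((c - d : ℝ) : EReal) ≤ b := by
  rw [← (EReal.addLECancellable_coe d).add_le_add_iff_right (b := a + ((c - d : ℝ) : EReal)),
    add_assoc, ← EReal.coe_add, _root_.sub_add_cancel]

lemma le_of_forall_mem_Ioc_le_add_mul {a b c : ℝ} (h : ∀ t ∈ Ioc (0 : ℝ) 1, a ≤ b + t * c) :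
    a ≤ b := by
  have hlim : Tendsto (fun t : ℝ => b + t * c) (𝓝[>] 0) (𝓝 b) := by
    have : Continuous fun t : ℝ => b + t * c := by fun_prop
    simpa using (this.tendsto 0).mono_left nhdsWithin_le_nhds
  exact ge_of_tendsto hlim (mem_of_superset (Ioc_mem_nhdsGT one_pos) h)

section Operators

variable {X : Type*} [AddCommGroup X]

lemma mem_opAdd_idOp_iff {A : Set (X × X)} {x y : X} :
    (x, y) ∈ opAdd (idOp X) A ↔ (x, y - x) ∈ A := by
  simp only [opAdd, idOp, mem_ofPred_eq]
  constructor
  · rintro ⟨_, z, rfl, hz, rfl⟩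
    simpa using hz
  · exact fun h => ⟨x, y - x, rfl, h, by abel⟩

variable [Module ℝ X]

lemma mem_opAdd_opSMul_idOp_iff {A : Set (X × X)} {c : ℝ} {x y : X} :
    (x, y) ∈ opAdd A (opSMul c (idOp X)) ↔ (x, y - c • x) ∈ A := by
  simp only [opAdd, opSMul, idOp, mem_ofPred_eq]
  constructor
  · rintro ⟨z, _, hz, ⟨_, rfl, rfl⟩, rfl⟩
    simpa using hz
  · exact fun h => ⟨y - c • x, c • x, h, ⟨x, rfl, rfl⟩, by abel⟩

lemma mem_opSMul_iff {A : Set (X × X)} {c : ℝ} (hc : c ≠ 0) {x y : X} :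
    (x, y) ∈ opSMul c A ↔ (x, c⁻¹ • y) ∈ A := by
  simp only [opSMul, mem_ofPred_eq]
  constructor
  · rintro ⟨z, hz, rfl⟩
    rwa [inv_smul_smul₀ hc]
  · exact fun h => ⟨_, h, (smul_inv_smul₀ hc y).symm⟩

lemma mem_opResolvent_iff {A : Set (X × X)} {c : ℝ} (hc : c ≠ 0) {x y : X} :
    (x, y) ∈ opResolvent c A ↔ (y, c⁻¹ • (x - y)) ∈ A := by
  rw [opResolvent, opInv, mem_ofPred_eq, mem_opAdd_idOp_iff, mem_opSMul_iff hc]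

end Operators

section QuadSubdiff

variable {H : Type*} [NormedAddCommGroup H] [InnerProductSpace ℝ H]

def quadSubdiff (μ : ℝ) (Φ : H → EReal) : Set (H × H) :=
  {p | ∀ h : H, Φ p.1 + ((⟪p.2, h⟫ + μ / 2 * ‖h‖ ^ 2 : ℝ) : EReal) ≤ Φ (p.1 + h)}

lemma quadSubdiff_antitone (Φ : H → EReal) : Antitone fun μ : ℝ => quadSubdiff μ Φ :=
  fun _ _ hμ _ hp h => le_trans (by gcongr) (hp h)

lemma subdiffL_eq_quadSubdiff (l : ℝ) (Φ : H → EReal) : subdiffL l Φ = quadSubdiff l Φ := by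
  ext ⟨y, v⟩
  simp only [subdiffL, mem_opAdd_opSMul_idOp_iff, subdiff, quadSubdiff, mem_ofPred_eq]
  refine forall_congr' fun h => ?_
  rw [sub_eq_add_neg (Φ y), sub_eq_add_neg (Φ (y + h)), ← EReal.coe_neg, ← EReal.coe_neg,
    add_assoc, ← EReal.coe_add, EReal.add_coe_le_add_coe_iff, inner_sub_left,
    real_inner_smul_left, norm_add_sq_real]
  ring_nf

lemma mem_proxOp_iff {Φ : H → EReal} {γ : ℝ} {x y : H} :
    (x, y) ∈ proxOp Φ γ ↔ (y, γ⁻¹ • (x - y)) ∈ quadSubdiff (-γ⁻¹) Φ := by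
  have hmin : (x, y) ∈ proxOp Φ γ ↔
      ∀ z, Φ y + ((‖y - x‖ ^ 2 / (2 * γ) : ℝ) : EReal)
        ≤ Φ z + ((‖z - x‖ ^ 2 / (2 * γ) : ℝ) : EReal) :=
    ⟨fun hp z => hp ▸ iInf_le _ z, fun h => le_antisymm (iInf_le _ y) (le_iInf h)⟩
  rw [hmin, ← (Equiv.addLeft y).forall_congr_right, quadSubdiff, mem_ofPred_eq]
  refine forall_congr' fun h => ?_
  have hsq : ‖y + h - x‖ ^ 2 = ‖y - x‖ ^ 2 + 2 * ⟪y - x, h⟫ + ‖h‖ ^ 2 := by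
    rw [add_sub_right_comm, norm_add_sq_real]
  rw [Equiv.coe_addLeft, EReal.add_coe_le_add_coe_iff, hsq, real_inner_smul_left,
    ← neg_sub y x, inner_neg_left]
  field_simp
  ring_nf

lemma LambdaConvex.quadSubdiff_subset {l : ℝ} {Φ : H → EReal} (hconv : LambdaConvex l Φ)
    (μ : ℝ) : quadSubdiff μ Φ ⊆ quadSubdiff l Φ := by
  rintro ⟨y, v⟩ hμ
  simp only [quadSubdiff, mem_ofPred_eq] at hμ ⊢
  intro h
  induction hy : Φ y with
  | bot => simp
  | top =>
    have := hμ h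
    rw [hy, EReal.top_add_coe, top_le_iff] at this
    rw [this]
    exact le_top
  | coe r =>
    induction hyh : Φ (y + h) with
    | bot =>
      have := hμ h
      rw [hy, hyh, ← EReal.coe_add, le_bot_iff] at this
      exact absurd this (EReal.coe_ne_bot _)
    | top => exact le_top
    | coe s =>
      rw [← EReal.coe_add, EReal.coe_le_coe_iff]
      refine le_of_forall_mem_Ioc_le_add_mul (c := (l - μ) / 2 * ‖h‖ ^ 2) fun t ht => ?_
      have hsegment : t • (y + h) + (1 - t) • y = y + t • h := by module
      have hupper := hconv (y + h) y t (Ioc_subset_Icc_self ht)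
      rw [hsegment, hyh, hy, add_sub_cancel_left] at hupper
      have hlower := (hμ (t • h)).trans hupper
      rw [hy, ← EReal.coe_mul, ← EReal.coe_mul, ← EReal.coe_add, ← EReal.coe_add,
        ← EReal.coe_sub, EReal.coe_le_coe_iff, inner_smul_right, norm_smul,
        Real.norm_of_nonneg ht.1.le] at hlower
      refine le_of_mul_le_mul_left ?_ ht.1
      linarith

lemma ne_top_of_mem_quadSubdiff {μ : ℝ} {Φ : H → EReal} (hproper : ∃ x, Φ x ≠ ⊤) {y v : H}
    (hp : (y, v) ∈ quadSubdiff μ Φ) : Φ y ≠ ⊤ := by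
  obtain ⟨z, hz⟩ := hproper
  intro hy
  have := hp (z - y)
  rw [hy, EReal.top_add_coe, top_le_iff, add_sub_cancel] at this
  exact hz this

lemma mul_norm_sq_le_inner_of_mem_quadSubdiff {μ : ℝ} {Φ : H → EReal} (hbot : ∀ x, Φ x ≠ ⊥)
    {y v y' v' : H} (hy : Φ y ≠ ⊤) (hy' : Φ y' ≠ ⊤)
    (hp : (y, v) ∈ quadSubdiff μ Φ) (hq : (y', v') ∈ quadSubdiff μ Φ) :
    μ * ‖y - y'‖ ^ 2 ≤ ⟪v - v', y - y'⟫ := by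
  have hpq := hp (y' - y)
  have hqp := hq (y - y')
  rw [add_sub_cancel] at hpq hqp
  rw [← EReal.coe_toReal hy (hbot y), ← EReal.coe_toReal hy' (hbot y'), ← EReal.coe_add,
    EReal.coe_le_coe_iff] at hpq hqp
  rw [← neg_sub y y', inner_neg_right, norm_neg] at hpq
  rw [inner_sub_left]
  linarith

lemma norm_le_inv_mul_norm_of_mul_norm_sq_le_inner {a b : H} {c : ℝ} (hc : 0 < c)
    (h : c * ‖b‖ ^ 2 ≤ ⟪a, b⟫) : ‖b‖ ≤ c⁻¹ * ‖a‖ := by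
  rcases (norm_nonneg b).eq_or_lt with hb | hb
  · rw [← hb]
    positivity
  rw [le_inv_mul_iff₀ hc]
  have := h.trans (real_inner_le_norm a b)
  nlinarith

end QuadSubdiff

lemma mem_Iomega_neg_iff {l γ : ℝ} : γ ∈ Iomega (-l) ↔ 0 < γ ∧ 0 < 1 + γ * l := by
  unfold Iomega
  split_ifs with hl
  · rw [mem_Ioo, lt_div_iff₀ hl]
    constructor <;> rintro ⟨hγ, h⟩ <;> refine ⟨hγ, by linarith⟩
  · rw [mem_Ioi]
    exact ⟨fun hγ => ⟨hγ, by nlinarith⟩, And.left⟩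

theorem proxOp_eq_resolvent_subdiffL_general {H : Type*} [NormedAddCommGroup H]
    [InnerProductSpace ℝ H] (l : ℝ) (Φ : H → EReal)
    (hbot : ∀ x, Φ x ≠ ⊥) (hproper : ∃ x, Φ x ≠ ⊤)
    (hconv : LambdaConvex l Φ)
    (γ : ℝ) (hγ : γ ∈ Iomega (-l)) :
    proxOp Φ γ = opResolvent γ (subdiffL l Φ) ∧
    ∀ p ∈ proxOp Φ γ, ∀ q ∈ proxOp Φ γ,
      ‖p.2 - q.2‖ ≤ (1 + γ * l)⁻¹ * ‖p.1 - q.1‖ := by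
  obtain ⟨hγ0, hγl⟩ := mem_Iomega_neg_iff.mp hγ
  have hμl : -γ⁻¹ ≤ l := by
    have := mul_pos (inv_pos.mpr hγ0) hγl
    rw [mul_add, mul_one, ← mul_assoc, inv_mul_cancel₀ hγ0.ne', one_mul] at this
    linarith
  have hprox : ∀ x y, (x, y) ∈ proxOp Φ γ ↔ (y, γ⁻¹ • (x - y)) ∈ quadSubdiff l Φ := fun x y =>
    mem_proxOp_iff.trans ⟨(hconv.quadSubdiff_subset _ ·), (quadSubdiff_antitone Φ hμl ·)⟩
  refine ⟨Set.ext fun ⟨x, y⟩ => ?_, ?_⟩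
  · rw [hprox, mem_opResolvent_iff hγ0.ne', subdiffL_eq_quadSubdiff]
  rintro ⟨x, y⟩ hp ⟨x', y'⟩ hq
  rw [hprox] at hp hq
  have hmono := mul_norm_sq_le_inner_of_mem_quadSubdiff hbot
    (ne_top_of_mem_quadSubdiff hproper hp) (ne_top_of_mem_quadSubdiff hproper hq) hp hq
  refine norm_le_inv_mul_norm_of_mul_norm_sq_le_inner hγl ?_
  rw [← smul_sub, real_inner_smul_left, sub_sub_sub_comm, inner_sub_left,
    real_inner_self_eq_norm_sq] at hmono
  have := mul_le_mul_of_nonneg_left hmono hγ0.le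
  rw [mul_inv_cancel_left₀ hγ0.ne'] at this
  simp only
  linarith

/-- Let `Φ : H → (−∞,+∞]` be proper, `λ`-convex and lower semicontinuous on a
real Hilbert space. Then for every `γ ∈ 𝔦_{−λ}` one has `J_γ(Φ) = R_γ(∂^λΦ)`, and for all
`(x,y), (x̂,ŷ) ∈ J_γ(Φ)`, `‖y − ŷ‖ ≤ (1 + γλ)⁻¹‖x − x̂‖`. -/
theorem proxOp_eq_resolvent_subdiffL {H : Type*} [NormedAddCommGroup H]
    [InnerProductSpace ℝ H] [CompleteSpace H] (l : ℝ) (Φ : H → EReal)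
    (hbot : ∀ x, Φ x ≠ ⊥) (hproper : ∃ x, Φ x ≠ ⊤)
    (hconv : LambdaConvex l Φ) (hlsc : LowerSemicontinuous Φ)
    (γ : ℝ) (hγ : γ ∈ Iomega (-l)) :
    proxOp Φ γ = opResolvent γ (subdiffL l Φ) ∧
    ∀ p ∈ proxOp Φ γ, ∀ q ∈ proxOp Φ γ,
      ‖p.2 - q.2‖ ≤ (1 + γ * l)⁻¹ * ‖p.1 - q.1‖ :=
  proxOp_eq_resolvent_subdiffL_general l Φ hbot hproper hconv γ hγ
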